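/- arXiv:2201.13068 — 3 statements merged into one kernel-verified Lean document; each statement's English description precedes it below -/
import Mathlib

section
/- Let h be a Lie algebra acting on an L∞ algebra g with 0-action κ: h → g^1 and 1-action ▷: h × g → g. Then h_0 := ker κ is a Lie subalgebra of h. Moreover, for every h ∈ h_0 the operator x ↦ h▷x commutes with d up to the relation d(h▷x) = h▷(dx) (since [κh, x]_2 = 0), hence induces an action of h_0 on the cohomology H(g) = ker d / im d by h▷x̄ := (h▷x)‾. -/
/-!
Every statement is an instance of an action axiom in which the terms involving `κ a` drop out
once `κ a = 0`: the axiom `d (a ▷ x) = [κ a, x]₂ + a ▷ d x` becomes `d (a ▷ x) = a ▷ d x`,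
the axiom `κ ⁅a, b⁆ = a ▷ κ b - b ▷ κ a` shows that `ker κ` is closed under the bracket,
and the `μ₂`-corrections in the `n = 2` identity vanish for `a, b ∈ ker κ`.
The only extra input is `a ▷ 0 = 0`, which the bracket axioms force.
-/

section LieAction

variable {K V A : Type} [AddCommGroup V] [LieRing A]

/-- Specialising the `n = 2` identity to `a = b = 0`, where `⁅0, 0⁆ = 0`. -/
lemma act_zero_left {act : A → V → V} (act2 : A → V → V → V) (κ : A → V)
    (h21 : ∀ (a b : A) (x : V),
      act ⁅a, b⁆ x = act a (act b x) - act b (act a x) + act2 a (κ b) x - act2 b (κ a) x)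
    (x : V) : act 0 x = 0 := by
  simpa using h21 0 0 x

variable [CommRing K] [Module K V] [LieAlgebra K A]

lemma act_zero_right {κ : A →ₗ[K] V} {act : A → V → V}
    (h11 : ∀ a b : A, κ ⁅a, b⁆ = act a (κ b) - act b (κ a)) (hact : ∀ x : V, act 0 x = 0)
    (a : A) : act a 0 = 0 := by
  simpa [hact] using (h11 a 0).symm

def kerLieSubalgebra (κ : A →ₗ[K] V) {act : A → V → V}
    (h11 : ∀ a b : A, κ ⁅a, b⁆ = act a (κ b) - act b (κ a)) (hact : ∀ a : A, act a 0 = 0) :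
    LieSubalgebra K A where
  toSubmodule := LinearMap.ker κ
  lie_mem' {a b} (ha : κ a = 0) (hb : κ b = 0) := by
    change κ ⁅a, b⁆ = 0
    rw [h11, ha, hb, hact, hact, sub_self]

lemma mem_kerLieSubalgebra {κ : A →ₗ[K] V} {act : A → V → V}
    (h11 : ∀ a b : A, κ ⁅a, b⁆ = act a (κ b) - act b (κ a)) (hact : ∀ a : A, act a 0 = 0)
    (a : A) : a ∈ kerLieSubalgebra κ h11 hact ↔ κ a = 0 :=
  LinearMap.mem_ker

lemma map_act_of_kappa_eq_zero {d : V →ₗ[K] V} {b2 : V → V → V} {κ : A →ₗ[K] V}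
    {act : A → V → V} (h12 : ∀ (a : A) (x : V), d (act a x) = b2 (κ a) x + act a (d x))
    (hb2zero : ∀ x : V, b2 0 x = 0) {a : A} (ha : κ a = 0) (x : V) :
    d (act a x) = act a (d x) := by
  rw [h12, ha, hb2zero, zero_add]

lemma act_lie_of_kappa_eq_zero {κ : A →ₗ[K] V} {act : A → V → V} {act2 : A → V → V → V}
    (h21 : ∀ (a b : A) (x : V),
      act ⁅a, b⁆ x = act a (act b x) - act b (act a x) + act2 a (κ b) x - act2 b (κ a) x)
    (hact2zero : ∀ (a : A) (x : V), act2 a 0 x = 0) {a b : A} (ha : κ a = 0) (hb : κ b = 0)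
    (x : V) : act ⁅a, b⁆ x = act a (act b x) - act b (act a x) := by
  rw [h21, ha, hb, hact2zero, hact2zero, sub_zero, add_zero]

end LieAction

theorem kernel_acts_on_cohomology_general
    {K V : Type} [Field K] [AddCommGroup V] [Module K V]
    (A : Type) [LieRing A] [LieAlgebra K A]
    (d : V →ₗ[K] V) (b2 : V → V → V)
    (κ : A →ₗ[K] V) (act : A → V → V) (act2 : A → V → V → V)
    (h11 : ∀ a b : A, κ ⁅a, b⁆ = act a (κ b) - act b (κ a))
    (h12 : ∀ (a : A) (x : V), d (act a x) = b2 (κ a) x + act a (d x))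
    (h21 : ∀ (a b : A) (x : V),
      act ⁅a, b⁆ x = act a (act b x) - act b (act a x) + act2 a (κ b) x - act2 b (κ a) x)
    (hb2zero : ∀ x : V, b2 0 x = 0)
    (hact2zero : ∀ (a : A) (x : V), act2 a 0 x = 0) :
    -- h₀ = ker κ is a Lie subalgebra of h:
    (∃ s : LieSubalgebra K A, ∀ a : A, a ∈ s ↔ κ a = 0) ∧
    -- for a ∈ h₀, a▷· commutes with d, hence preserves cocycles and coboundaries,
    -- inducing an action on H(g) = ker d / im d:
    (∀ (a : A) (x : V), κ a = 0 → d (act a x) = act a (d x)) ∧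
    (∀ (a : A) (x : V), κ a = 0 → d x = 0 → d (act a x) = 0) ∧
    (∀ (a : A) (y : V), κ a = 0 → act a (d y) ∈ LinearMap.range d) ∧
    -- the induced operation is a Lie algebra action on cocycles:
    (∀ (a b : A) (x : V), κ a = 0 → κ b = 0 →
      act ⁅a, b⁆ x = act a (act b x) - act b (act a x)) := by
  have hact : ∀ a : A, act a 0 = 0 := act_zero_right h11 (act_zero_left act2 κ h21)
  have hcomm := fun a x (ha : κ a = 0) => map_act_of_kappa_eq_zero h12 hb2zero ha x
  refine ⟨⟨kerLieSubalgebra κ h11 hact, mem_kerLieSubalgebra h11 hact⟩, hcomm, ?_, ?_,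
    fun a b x ha hb => act_lie_of_kappa_eq_zero h21 hact2zero ha hb x⟩
  · intro a x ha hx
    rw [hcomm a x ha, hx, hact]
  · intro a y ha
    exact ⟨act a y, hcomm a y ha⟩

theorem kernel_acts_on_cohomology
    {K V : Type} [Field K] [CharZero K] [AddCommGroup V] [Module K V]
    (A : Type) [LieRing A] [LieAlgebra K A]
    (ℬ : ℤ → Submodule K V)
    (d : V →ₗ[K] V) (b2 : V → V → V)
    (κ : A →ₗ[K] V) (act : A → V → V) (act2 : A → V → V → V)
    (hκdeg : ∀ a : A, κ a ∈ ℬ 1)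
    (h0 : ∀ a : A, d (κ a) = 0)
    (h11 : ∀ a b : A, κ ⁅a, b⁆ = act a (κ b) - act b (κ a))
    (h12 : ∀ (a : A) (x : V), d (act a x) = b2 (κ a) x + act a (d x))
    (h21 : ∀ (a b : A) (x : V),
      act ⁅a, b⁆ x = act a (act b x) - act b (act a x) + act2 a (κ b) x - act2 b (κ a) x)
    (hb2zero : ∀ x : V, b2 0 x = 0)
    (hact2zero : ∀ (a : A) (x : V), act2 a 0 x = 0) :
    -- h₀ = ker κ is a Lie subalgebra of h:
    (∃ s : LieSubalgebra K A, ∀ a : A, a ∈ s ↔ κ a = 0) ∧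
    -- for a ∈ h₀, a▷· commutes with d, hence preserves cocycles and coboundaries,
    -- inducing an action on H(g) = ker d / im d:
    (∀ (a : A) (x : V), κ a = 0 → d (act a x) = act a (d x)) ∧
    (∀ (a : A) (x : V), κ a = 0 → d x = 0 → d (act a x) = 0) ∧
    (∀ (a : A) (y : V), κ a = 0 → act a (d y) ∈ LinearMap.range d) ∧
    -- the induced operation is a Lie algebra action on cocycles:
    (∀ (a b : A) (x : V), κ a = 0 → κ b = 0 →
      act ⁅a, b⁆ x = act a (act b x) - act b (act a x)) :=
  kernel_acts_on_cohomology_general A d b2 κ act act2 h11 h12 h21 hb2zero hact2zero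
end

section
/- Let h be a Lie algebra acting on an L∞ algebra g with κ: h → g^1 and action maps ▷. For h ∈ ker κ the induced action on the graded Lie algebra H(g) acts by derivations: h▷[x̄_1, x̄_2] = [h▷x̄_1, x̄_2] + [x̄_1, h▷x̄_2] for all cohomology classes x̄_1, x̄_2 ∈ H(g). -/
theorem kernel_acts_by_derivations_on_cohomology_general
    {K V : Type} [Field K] [AddCommGroup V] [Module K V]
    (A : Type) [LieRing A] [LieAlgebra K A]
    (d : V →ₗ[K] V) (b2 : V → V → V) (t3 : V → V → V → V)
    (κ : A →ₗ[K] V) (act : A → V → V) (act2 : A → V → V → V)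
    (hcompat : ∀ (a : A) (x₁ x₂ : V),
      act2 a (d x₁) x₂ + act2 a x₁ (d x₂) + act a (b2 x₁ x₂) =
        -(t3 (κ a) x₁ x₂) + b2 (act a x₁) x₂ + b2 x₁ (act a x₂) - d (act2 a x₁ x₂))
    (ht3zero : ∀ x y : V, t3 0 x y = 0)
    (hact2zeroL : ∀ (a : A) (y : V), act2 a 0 y = 0)
    (hact2zeroR : ∀ (a : A) (y : V), act2 a y 0 = 0) :
    ∀ (a : A) (x₁ x₂ : V), κ a = 0 → d x₁ = 0 → d x₂ = 0 →
      act a (b2 x₁ x₂) - b2 (act a x₁) x₂ - b2 x₁ (act a x₂) ∈ LinearMap.range d := by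
  intro a x₁ x₂ hκ hx₁ hx₂
  have h := hcompat a x₁ x₂
  rw [hκ, hx₁, hx₂, ht3zero, hact2zeroL, hact2zeroR, zero_add, zero_add, neg_zero, zero_add] at h
  refine ⟨-act2 a x₁ x₂, ?_⟩
  rw [map_neg, h]
  abel

theorem kernel_acts_by_derivations_on_cohomology
    {K V : Type} [Field K] [CharZero K] [AddCommGroup V] [Module K V]
    (A : Type) [LieRing A] [LieAlgebra K A]
    (d : V →ₗ[K] V) (b2 : V → V → V) (t3 : V → V → V → V)
    (κ : A →ₗ[K] V) (act : A → V → V) (act2 : A → V → V → V)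
    (hcompat : ∀ (a : A) (x₁ x₂ : V),
      act2 a (d x₁) x₂ + act2 a x₁ (d x₂) + act a (b2 x₁ x₂) =
        -(t3 (κ a) x₁ x₂) + b2 (act a x₁) x₂ + b2 x₁ (act a x₂) - d (act2 a x₁ x₂))
    (ht3zero : ∀ x y : V, t3 0 x y = 0)
    (hact2zeroL : ∀ (a : A) (y : V), act2 a 0 y = 0)
    (hact2zeroR : ∀ (a : A) (y : V), act2 a y 0 = 0) :
    ∀ (a : A) (x₁ x₂ : V), κ a = 0 → d x₁ = 0 → d x₂ = 0 →
      act a (b2 x₁ x₂) - b2 (act a x₁) x₂ - b2 x₁ (act a x₂) ∈ LinearMap.range d :=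
  kernel_acts_by_derivations_on_cohomology_general A d b2 t3 κ act act2 hcompat ht3zero hact2zeroL
    hact2zeroR
end

section
/- Let (L,A) be a Lie pair with splitting L ≅ A⊕B, and let κ: Der(L) → Ω^1_A(B) be defined by κ(δ)(a) := −pr_B δ(a). Then d^Bott_A(κ(δ)) = 0 for every δ ∈ Der(L); that is, for all a_1,a_2 ∈ Γ(A): ∇_{a_1}(κ(δ)(a_2)) − ∇_{a_2}(κ(δ)(a_1)) − κ(δ)([a_1,a_2]_A) = 0. -/
/-!
Since `A` is closed under the bracket, `pr_B ⁅a, x⁆` for `a ∈ A` only depends on `pr_B x`, so it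
is the Bott connection `∇_a (pr_B x)`. Applying `pr_B` to the derivation rule
`δ ⁅a₁, a₂⁆ = ⁅δ a₁, a₂⁆ + ⁅a₁, δ a₂⁆` therefore gives
`pr_B (δ ⁅a₁, a₂⁆) = ∇_{a₁} (pr_B (δ a₂)) - ∇_{a₂} (pr_B (δ a₁))`, which is `d^Bott_A κ(δ) = 0`.
-/

/-- `δ` is a derivation of the Lie algebroid `L` with symbol `s`. -/
def IsLieAlgebroidDerivation
    (K R L : Type) [CommRing K] [CommRing R] [Algebra K R]
    [LieRing L] [LieAlgebra K L] [Module R L]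
    (ρ : L →ₗ[R] Derivation K R R)
    (s : Derivation K R R) (δ : L →ₗ[K] L) : Prop :=
  (∀ (f : R) (u : L), δ (f • u) = s f • u + f • δ u) ∧
  (∀ u : L, ρ (δ u) = ⁅s, ρ u⁆) ∧
  (∀ u v : L, δ ⁅u, v⁆ = ⁅δ u, v⁆ + ⁅u, δ v⁆)

variable (K R L : Type) [CommRing K] [CommRing R] [Algebra K R]
variable [LieRing L] [LieAlgebra K L] [Module R L]
variable (ρ : L →ₗ[R] Derivation K R R)
variable (A B : Submodule R L) (hAB : IsCompl A B)

/-- The projection pr_A : L → A ⊆ L associated to the splitting L = A ⊕ B. -/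
noncomputable def prA : L →ₗ[R] L :=
  A.subtype ∘ₗ Submodule.linearProjOfIsCompl A B hAB

/-- The projection pr_B : L → B ⊆ L associated to the splitting L = A ⊕ B. -/
noncomputable def prB : L →ₗ[R] L :=
  B.subtype ∘ₗ Submodule.linearProjOfIsCompl B A hAB.symm

section Splitting

variable {R L A B}

theorem prB_eq_projection : prB R L A B hAB = B.projection A hAB.symm := rfl

theorem prB_lie_prB_of_mem (hA : ∀ x ∈ A, ∀ y ∈ A, ⁅x, y⁆ ∈ A) {a : L} (ha : a ∈ A) (x : L) :
    prB R L A B hAB ⁅a, prB R L A B hAB x⁆ = prB R L A B hAB ⁅a, x⁆ := by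
  have hprA : ⁅a, prA R L A B hAB x⁆ ∈ A := hA a ha _ (Submodule.projection_apply_mem hAB x)
  have hsplit : prA R L A B hAB x + prB R L A B hAB x = x :=
    Submodule.projection_add_projection_eq_self hAB x
  symm
  calc prB R L A B hAB ⁅a, x⁆
      = prB R L A B hAB ⁅a, prA R L A B hAB x⁆ + prB R L A B hAB ⁅a, prB R L A B hAB x⁆ := by
        rw [← map_add, ← lie_add, hsplit]
    _ = prB R L A B hAB ⁅a, prB R L A B hAB x⁆ := by
        rw [prB_eq_projection, Submodule.projection_apply_of_mem_right _ hprA, zero_add]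

theorem prB_map_lie_eq_sub (hA : ∀ x ∈ A, ∀ y ∈ A, ⁅x, y⁆ ∈ A) (δ : L → L)
    (hδ : ∀ u v : L, δ ⁅u, v⁆ = ⁅δ u, v⁆ + ⁅u, δ v⁆) {a₁ a₂ : L} (ha₁ : a₁ ∈ A) (ha₂ : a₂ ∈ A) :
    prB R L A B hAB (δ ⁅a₁, a₂⁆) =
      prB R L A B hAB ⁅a₁, prB R L A B hAB (δ a₂)⁆
        - prB R L A B hAB ⁅a₂, prB R L A B hAB (δ a₁)⁆ := by
  rw [hδ, map_add, prB_lie_prB_of_mem hAB hA ha₁, prB_lie_prB_of_mem hAB hA ha₂,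
    ← lie_skew (δ a₁) a₂, map_neg]
  abel

end Splitting

theorem bott_differential_of_kappa_vanishes
    (hA : ∀ x ∈ A, ∀ y ∈ A, ⁅x, y⁆ ∈ A)
    (s : Derivation K R R) (δ : L →ₗ[K] L)
    (hδ : IsLieAlgebroidDerivation K R L ρ s δ) :
    ∀ a₁ ∈ A, ∀ a₂ ∈ A,
      prB R L A B hAB ⁅a₁, -(prB R L A B hAB (δ a₂))⁆
        - prB R L A B hAB ⁅a₂, -(prB R L A B hAB (δ a₁))⁆
        - (-(prB R L A B hAB (δ ⁅a₁, a₂⁆))) = 0 := by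
  intro a₁ ha₁ a₂ ha₂
  rw [prB_map_lie_eq_sub hAB hA δ hδ.2.2 ha₁ ha₂, lie_neg, lie_neg, map_neg, map_neg]
  abel
end
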